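/- arXiv:1310.1783 — 4 statements merged into one kernel-verified Lean document; each statement's English description precedes it below -/
import Mathlib

section
/- Fix index sets and unit vectors u₁,…,u_N. The set G_I of parameter tuples (t₁,…,t_N) ∈ ℝ^N such that there exists x ∈ ℝ^d with ⟨x,u_i⟩ = t_i for all i ∈ I and ⟨x,u_j⟩ ≤ t_j for all j, is closed in ℝ^N, provided the only solution of ⟨x,u_i⟩ ≤ 0 for all i = 1,…,N is x = 0. -/
open Set
open Filter Topology
open scoped RealInnerProductSpace

/-- The set `G_I` of parameter tuples for which some point satisfies the
equalities indexed by `I` and all the inequalities is closed, provided the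
homogeneous system has only the trivial solution. -/
theorem stmt8 {d N : ℕ} (u : Fin N → EuclideanSpace ℝ (Fin d))
    (hu : ∀ i, ‖u i‖ = 1)
    (hbd : ∀ x : EuclideanSpace ℝ (Fin d), (∀ i, ⟪x, u i⟫ ≤ 0) → x = 0)
    (I : Set (Fin N)) :
    IsClosed {t : Fin N → ℝ | ∃ x : EuclideanSpace ℝ (Fin d),
      (∀ i ∈ I, ⟪x, u i⟫ = t i) ∧ ∀ j, ⟪x, u j⟫ ≤ t j} := by
  rcases Nat.eq_zero_or_pos N with hN | hN
  · subst hN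
    convert isClosed_univ
    ext t
    simp only [mem_setOf_eq, mem_univ, iff_true]
    exact ⟨0, fun i _ => i.elim0, fun j => j.elim0⟩
  haveI : NeZero N := ⟨hN.ne'⟩
  -- key coercivity constant
  have key : ∃ c : ℝ, 0 < c ∧ ∀ x : EuclideanSpace ℝ (Fin d), ∃ i, c * ‖x‖ ≤ ⟪x, u i⟫ := by
    by_cases hE : ∀ x : EuclideanSpace ℝ (Fin d), x = 0
    · refine ⟨1, one_pos, fun x => ⟨⟨0, hN⟩, ?_⟩⟩
      rw [hE x]
      simp
    push_neg at hE
    obtain ⟨x₀, hx₀⟩ := hE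
    have hne : (Finset.univ : Finset (Fin N)).Nonempty := Finset.univ_nonempty
    set g : EuclideanSpace ℝ (Fin d) → ℝ := fun x => Finset.univ.sup' hne (fun i => ⟪x, u i⟫) with hg
    have hgc : Continuous g := by
      apply Continuous.finset_sup'_apply hne
      intro i _
      exact continuous_id.inner continuous_const
    have hsph : (Metric.sphere (0 : EuclideanSpace ℝ (Fin d)) 1).Nonempty := by
      refine ⟨‖x₀‖⁻¹ • x₀, ?_⟩
      simp [norm_smul, norm_ne_zero_iff.mpr hx₀,
        inv_mul_cancel₀ (norm_ne_zero_iff.mpr hx₀)]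
    have hcpt : IsCompact (Metric.sphere (0 : EuclideanSpace ℝ (Fin d)) 1) := isCompact_sphere 0 1
    obtain ⟨y, hy, hymin⟩ := hcpt.exists_isMinOn hsph hgc.continuousOn
    have hypos : 0 < g y := by
      by_contra h
      push_neg at h
      have : ∀ i, ⟪y, u i⟫ ≤ 0 := fun i =>
        le_trans (Finset.le_sup' (fun i => ⟪y, u i⟫) (Finset.mem_univ i)) h
      have : y = 0 := hbd y this
      rw [mem_sphere_zero_iff_norm] at hy
      simp [this] at hy
    refine ⟨g y, hypos, fun x => ?_⟩
    rcases eq_or_ne x 0 with rfl | hx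
    · exact ⟨⟨0, hN⟩, by simp⟩
    have hxn : (0:ℝ) < ‖x‖ := norm_pos_iff.mpr hx
    have hmem : ‖x‖⁻¹ • x ∈ Metric.sphere (0 : EuclideanSpace ℝ (Fin d)) 1 := by
      simp [norm_smul, inv_mul_cancel₀ hxn.ne']
    have hle : g y ≤ g (‖x‖⁻¹ • x) := hymin hmem
    obtain ⟨i, _, hi⟩ := Finset.exists_mem_eq_sup' hne (fun j => ⟪(‖x‖⁻¹ • x : EuclideanSpace ℝ (Fin d)), u j⟫)
    refine ⟨i, ?_⟩
    have h1 : g y ≤ ⟪(‖x‖⁻¹ • x : EuclideanSpace ℝ (Fin d)), u i⟫ := by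
      rw [← hi]; exact hle
    have h2 : ⟪(‖x‖⁻¹ • x : EuclideanSpace ℝ (Fin d)), u i⟫ = ‖x‖⁻¹ * ⟪x, u i⟫ := real_inner_smul_left _ _ _
    rw [h2] at h1
    have := mul_le_mul_of_nonneg_left h1 hxn.le
    rw [← mul_assoc, mul_inv_cancel₀ hxn.ne', one_mul] at this
    linarith [this]
  obtain ⟨c, hc, hcoer⟩ := key
  apply IsSeqClosed.isClosed
  intro ts t hmem htend
  choose x hx1 hx2 using hmem
  -- bound on ts
  obtain ⟨M, hM⟩ := (htend.norm.bddAbove_range)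
  simp only [upperBounds, mem_setOf_eq, forall_mem_range] at hM
  -- bound on x
  have hxb : ∀ n, x n ∈ Metric.closedBall (0 : EuclideanSpace ℝ (Fin d)) (M / c) := by
    intro n
    rw [Metric.mem_closedBall, dist_zero_right]
    obtain ⟨i, hi⟩ := hcoer (x n)
    have h1 : ⟪x n, u i⟫ ≤ ts n i := hx2 n i
    have h2 : ts n i ≤ ‖ts n‖ := le_trans (le_abs_self _) (norm_le_pi_norm (ts n) i)
    have h3 : c * ‖x n‖ ≤ M := le_trans hi (le_trans h1 (le_trans h2 (hM n)))
    rw [le_div_iff₀ hc, mul_comm]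
    exact h3
  obtain ⟨x₀, -, φ, hφ, hxlim⟩ :=
    tendsto_subseq_of_bounded Metric.isBounded_closedBall hxb
  refine ⟨x₀, ?_, ?_⟩
  · intro i hi
    have hL : Filter.Tendsto (fun n => ⟪x (φ n), u i⟫) Filter.atTop (𝓝 ⟪x₀, u i⟫) :=
      ((continuous_id.inner (continuous_const : Continuous fun _ : EuclideanSpace ℝ (Fin d) => u i)).tendsto x₀).comp hxlim
    have hR : Filter.Tendsto (fun n => ts (φ n) i) Filter.atTop (𝓝 (t i)) :=
      ((continuous_apply i).tendsto t).comp (htend.comp hφ.tendsto_atTop)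
    have heq : (fun n => ⟪x (φ n), u i⟫) = fun n => ts (φ n) i := by
      funext n; exact hx1 (φ n) i hi
    rw [heq] at hL
    exact tendsto_nhds_unique hL hR
  · intro j
    have hL : Filter.Tendsto (fun n => ⟪x (φ n), u j⟫) Filter.atTop (𝓝 ⟪x₀, u j⟫) :=
      ((continuous_id.inner (continuous_const : Continuous fun _ : EuclideanSpace ℝ (Fin d) => u j)).tendsto x₀).comp hxlim
    have hR : Filter.Tendsto (fun n => ts (φ n) j) Filter.atTop (𝓝 (t j)) :=
      ((continuous_apply j).tendsto t).comp (htend.comp hφ.tendsto_atTop)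
    exact le_of_tendsto_of_tendsto hL hR
      (Filter.Eventually.of_forall fun n => hx2 (φ n) j)
end

section
/- The three functions of (φ,ψ) given by f₁(φ,ψ) = cos²φ·cotψ − sinφ·cosφ, f₂(φ,ψ) = sin²φ·cotψ + sinφ·cosφ, and f₃(φ,ψ) = sinφ·cosφ·cotψ + cos²φ − sin²φ, together with the constant function 1, are linearly independent as functions on any nonempty open subset U of {(φ,ψ) : ψ ∈ (0,π)} ⊆ ℝ². -/
open Set Real

lemma analyticAt_ccos (z : ℂ) : AnalyticAt ℂ Complex.cos z := by
  have : Complex.cos = fun z => (Complex.exp (z * Complex.I) + Complex.exp (-z * Complex.I)) / 2 := by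
    ext z; rw [Complex.cos]
  rw [this]
  exact (((analyticAt_cexp.comp (analyticAt_id.mul analyticAt_const)).add
      (analyticAt_cexp.comp ((analyticAt_id.neg).mul analyticAt_const)))).div
      analyticAt_const (by norm_num)

lemma analyticAt_csin (z : ℂ) : AnalyticAt ℂ Complex.sin z := by
  have : Complex.sin = fun z =>
      (Complex.exp (-z * Complex.I) - Complex.exp (z * Complex.I)) * Complex.I / 2 := by
    ext z; rw [Complex.sin]
  rw [this]
  exact ((((analyticAt_cexp.comp ((analyticAt_id.neg).mul analyticAt_const)).sub
      (analyticAt_cexp.comp (analyticAt_id.mul analyticAt_const))).mul analyticAt_const)).div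
      analyticAt_const (by norm_num)

lemma analyticAt_rcos (x : ℝ) : AnalyticAt ℝ Real.cos x := by
  have : Real.cos = fun x : ℝ => Complex.reCLM (Complex.cos (Complex.ofRealCLM x)) := by
    ext x; simp [Real.cos]
  rw [this]
  exact (Complex.reCLM.analyticAt _).comp
    (((analyticAt_ccos _).restrictScalars).comp (Complex.ofRealCLM.analyticAt _))

lemma analyticAt_rsin (x : ℝ) : AnalyticAt ℝ Real.sin x := by
  have : Real.sin = fun x : ℝ => Complex.reCLM (Complex.sin (Complex.ofRealCLM x)) := by
    ext x; simp [Real.sin]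
  rw [this]
  exact (Complex.reCLM.analyticAt _).comp
    (((analyticAt_csin _).restrictScalars).comp (Complex.ofRealCLM.analyticAt _))


/-- The functions `cos²φ·cotψ − sinφcosφ`, `sin²φ·cotψ + sinφcosφ`,
`sinφcosφ·cotψ + cos²φ − sin²φ` and `1` are linearly independent on any
nonempty open subset of `ℝ × (0,π)`. -/
theorem stmt10 (U : Set (ℝ × ℝ)) (hU : IsOpen U) (hUne : U.Nonempty)
    (hUsub : ∀ p ∈ U, p.2 ∈ Set.Ioo 0 Real.pi)
    (α₁ α₂ α₃ α₄ : ℝ)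
    (h : ∀ p ∈ U,
      α₁ * ((Real.cos p.1) ^ 2 * (Real.cos p.2 / Real.sin p.2) - Real.sin p.1 * Real.cos p.1)
      + α₂ * ((Real.sin p.1) ^ 2 * (Real.cos p.2 / Real.sin p.2) + Real.sin p.1 * Real.cos p.1)
      + α₃ * (Real.sin p.1 * Real.cos p.1 * (Real.cos p.2 / Real.sin p.2)
          + (Real.cos p.1) ^ 2 - (Real.sin p.1) ^ 2)
      + α₄ = 0) :
    α₁ = 0 ∧ α₂ = 0 ∧ α₃ = 0 ∧ α₄ = 0 := by
  set F : ℝ × ℝ → ℝ := fun p =>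
      α₁ * ((Real.cos p.1) ^ 2 * (Real.cos p.2 / Real.sin p.2) - Real.sin p.1 * Real.cos p.1)
      + α₂ * ((Real.sin p.1) ^ 2 * (Real.cos p.2 / Real.sin p.2) + Real.sin p.1 * Real.cos p.1)
      + α₃ * (Real.sin p.1 * Real.cos p.1 * (Real.cos p.2 / Real.sin p.2)
          + (Real.cos p.1) ^ 2 - (Real.sin p.1) ^ 2)
      + α₄ with hF
  set V : Set (ℝ × ℝ) := Set.univ ×ˢ Set.Ioo 0 Real.pi with hV
  have hFan : AnalyticOnNhd ℝ F V := by
    intro p hp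
    have hs : Real.sin p.2 ≠ 0 :=
      ne_of_gt (Real.sin_pos_of_pos_of_lt_pi hp.2.1 hp.2.2)
    have h1 : AnalyticAt ℝ (fun p : ℝ × ℝ => Real.cos p.1) p :=
      (analyticAt_rcos _).comp analyticAt_fst
    have h2 : AnalyticAt ℝ (fun p : ℝ × ℝ => Real.sin p.1) p :=
      (analyticAt_rsin _).comp analyticAt_fst
    have h3 : AnalyticAt ℝ (fun p : ℝ × ℝ => Real.cos p.2) p :=
      (analyticAt_rcos _).comp analyticAt_snd
    have h4 : AnalyticAt ℝ (fun p : ℝ × ℝ => Real.sin p.2) p :=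
      (analyticAt_rsin _).comp analyticAt_snd
    have hc : AnalyticAt ℝ (fun p : ℝ × ℝ => Real.cos p.2 / Real.sin p.2) p :=
      h3.div h4 hs
    have H := (((analyticAt_const (v := α₁)).mul (((h1.pow 2).mul hc).sub (h2.mul h1))).add
      ((analyticAt_const (v := α₂)).mul (((h2.pow 2).mul hc).add (h2.mul h1)))).add
      (((analyticAt_const (v := α₃)).mul ((((h2.mul h1).mul hc).add (h1.pow 2)).sub (h2.pow 2))).add
        (analyticAt_const (v := α₄)))
    exact H.congr (Filter.Eventually.of_forall fun q => by rw [hF]; simp [Pi.add_apply, Pi.sub_apply, Pi.mul_apply, Pi.pow_apply]; ring)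
  have hVconn : IsPreconnected V := (convex_univ.prod (convex_Ioo 0 Real.pi)).isPreconnected
  obtain ⟨z₀, hz₀⟩ := hUne
  have hz₀V : z₀ ∈ V := ⟨Set.mem_univ _, hUsub z₀ hz₀⟩
  have hev : F =ᶠ[nhds z₀] 0 := by
    filter_upwards [hU.mem_nhds hz₀] with p hp
    exact h p hp
  have hEq : Set.EqOn F 0 V :=
    hFan.eqOn_zero_of_preconnected_of_eventuallyEq_zero hVconn hz₀V hev
  have hpi : (0:ℝ) < Real.pi := Real.pi_pos
  have hv1 : ((0:ℝ), Real.pi/2) ∈ V := ⟨Set.mem_univ _, by constructor <;> nlinarith⟩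
  have hv2 : ((Real.pi/2 : ℝ), Real.pi/2) ∈ V := ⟨Set.mem_univ _, by constructor <;> nlinarith⟩
  have hv3 : ((0:ℝ), Real.pi/4) ∈ V := ⟨Set.mem_univ _, by constructor <;> nlinarith⟩
  have hv4 : ((Real.pi/2 : ℝ), Real.pi/4) ∈ V := ⟨Set.mem_univ _, by constructor <;> nlinarith⟩
  have e1 := hEq hv1
  have e2 := hEq hv2
  have e3 := hEq hv3
  have e4 := hEq hv4
  simp only [hF, Pi.zero_apply, Real.cos_pi_div_two, Real.sin_pi_div_two, Real.cos_zero,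
    Real.sin_zero, Real.cos_pi_div_four, Real.sin_pi_div_four] at e1 e2 e3 e4
  rw [div_self (by positivity : (Real.sqrt 2)/2 ≠ 0)] at e3 e4
  refine ⟨by linarith, by linarith, by linarith, by linarith⟩
end

section
/- Let K ⊆ ℝ² be a compact convex set with nonempty interior and let C ⊆ ℝ² be a fixed compact set containing 0 (e.g. a cube centered suitably). If for every boundary point x ∈ ∂K there exists a > 0 with (K − x) ∩ aC ≠ {0}, then there exists δ > 0 such that for all a < δ and all x ∈ ∂K, (K − x) ∩ aC ≠ {0}. -/
open Set Filter Topology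
open scoped Pointwise RealInnerProductSpace

/-! If `x + a • c ∈ K` with `a > 0`, then `y + t • c ∈ K` for all `y ∈ K` near `x` and all small
`t > 0`. Otherwise unit normals separating such points `y + t • c` from `K` accumulate at a unit
normal `w` supporting `K` at `x`, and `w ⟂ c` because `x + a • c ∈ K`. In the plane `w` and `c`
span everything, which turns the separation into `a‖c‖ < ‖x - y‖ + t‖c‖`, impossible near `x`.
Compactness of `frontier K` then makes the scale uniform. -/

section InnerProductSpace

variable {E : Type*} [NormedAddCommGroup E] [InnerProductSpace ℝ E]

theorem exists_norm_eq_one_inner_lt_of_notMem [CompleteSpace E] {K : Set E} (hK : IsClosed K)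
    (hconv : Convex ℝ K) (hne : K.Nonempty) {p : E} (hp : p ∉ K) :
    ∃ w : E, ‖w‖ = 1 ∧ ∀ b ∈ K, ⟪w, b⟫ < ⟪w, p⟫ := by
  obtain ⟨f, u, hfK, hfp⟩ := geometric_hahn_banach_closed_point hconv hK hp
  obtain ⟨v, hv⟩ : ∃ v : E, ∀ y, ⟪v, y⟫ = f y :=
    ⟨(InnerProductSpace.toDual ℝ E).symm f, fun _ => InnerProductSpace.toDual_symm_apply⟩
  have hlt : ∀ b ∈ K, ⟪v, b⟫ < ⟪v, p⟫ := fun b hb => by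
    rw [hv, hv]; exact (hfK b hb).trans hfp
  obtain ⟨b, hb⟩ := hne
  have hv0 : v ≠ 0 := by
    intro h0
    simpa [h0] using hlt b hb
  refine ⟨‖v‖⁻¹ • v, norm_smul_inv_norm hv0, fun b hb => ?_⟩
  rw [real_inner_smul_left, real_inner_smul_left]
  exact mul_lt_mul_of_pos_left (hlt b hb) (by positivity)

theorem eq_inner_smul_add_inner_smul_of_finrank_eq_two (hE : Module.finrank ℝ E = 2) {w e : E}
    (hw : ‖w‖ = 1) (he : ‖e‖ = 1) (hwe : ⟪w, e⟫ = 0) (z : E) :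
    z = ⟪w, z⟫ • w + ⟪e, z⟫ • e := by
  have hon : Orthonormal ℝ ![w, e] := by
    simp [orthonormal_vecCons_iff, hw, he, hwe]
  have hspan := hon.linearIndependent.span_eq_top_of_card_eq_finrank (by simp [hE])
  simpa [Fin.sum_univ_two] using ((OrthonormalBasis.mk hon hspan.ge).sum_repr' z).symm

theorem neg_norm_mul_inner_le_of_finrank_eq_two (hE : Module.finrank ℝ E = 2) {w c v z : E}
    (hw : ‖w‖ = 1) (hwc : ⟪w, c⟫ = 0) (hvw : 0 ≤ ⟪v, w⟫) (hvc : 0 ≤ ⟪v, c⟫) (hwz : 0 ≤ ⟪w, z⟫) :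
    -(‖z‖ * ⟪v, c⟫) ≤ ‖c‖ * ⟪v, z⟫ := by
  rcases eq_or_ne c 0 with rfl | hc
  · simp
  set e := ‖c‖⁻¹ • c
  have hce : c = ‖c‖ • e := by simp [e, smul_smul, hc]
  have hwe : ⟪w, e⟫ = 0 := by simp [e, real_inner_smul_right, hwc]
  have he : ‖e‖ = 1 := by simp [e, norm_smul, hc]
  have hz := eq_inner_smul_add_inner_smul_of_finrank_eq_two hE hw he hwe z
  have hez : -‖z‖ ≤ ⟪e, z⟫ := by
    have := abs_real_inner_le_norm e z
    rw [he, one_mul] at this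
    exact (abs_le.1 this).1
  have hvc' : ⟪v, c⟫ = ‖c‖ * ⟪v, e⟫ := by
    conv_lhs => rw [hce]
    exact real_inner_smul_right _ _ _
  have hvz : ⟪v, z⟫ = ⟪w, z⟫ * ⟪v, w⟫ + ⟪e, z⟫ * ⟪v, e⟫ := by
    conv_lhs => rw [hz]
    simp only [inner_add_right, real_inner_smul_right]
  rw [hvz, hvc']
  nlinarith [mul_nonneg hwz hvw, norm_nonneg c, mul_nonneg (norm_nonneg c) hvc]

theorem mul_norm_lt_of_inner_add_smul_sub_lt (hE : Module.finrank ℝ E = 2) {w c v x y : E}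
    {a t : ℝ} (hw : ‖w‖ = 1) (hwc : ⟪w, c⟫ = 0) (hwxy : 0 ≤ ⟪w, x - y⟫) (hvw : 0 ≤ ⟪v, w⟫)
    (hvc : 0 < ⟪v, c⟫) (hv : ⟪v, x + a • c - y⟫ < t * ⟪v, c⟫) :
    a * ‖c‖ < ‖x - y‖ + t * ‖c‖ := by
  have h2d := neg_norm_mul_inner_le_of_finrank_eq_two hE hw hwc hvw hvc.le hwxy
  rw [show x + a • c - y = (x - y) + a • c by abel, inner_add_right,
    real_inner_smul_right] at hv
  have hc : 0 < ‖c‖ := norm_pos_iff.2 fun h0 => by simp [h0] at hvc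
  by_contra! hle
  nlinarith [mul_le_mul_of_nonneg_right hle hvc.le, mul_lt_mul_of_pos_left hv hc]

theorem inner_sub_nonpos_of_tendsto {x c w₀ b : E} {xs w : ℕ → E} {as : ℕ → ℝ}
    (hxs : Tendsto xs atTop (𝓝 x)) (has : Tendsto as atTop (𝓝 0)) (hw : Tendsto w atTop (𝓝 w₀))
    (hb : ∀ n, ⟪w n, b - xs n⟫ ≤ as n * ⟪w n, c⟫) : ⟪w₀, b - x⟫ ≤ 0 := by
  have hlim : Tendsto (fun n => as n * ⟪w n, c⟫) atTop (𝓝 (0 * ⟪w₀, c⟫)) :=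
    has.mul (hw.inner tendsto_const_nhds)
  rw [zero_mul] at hlim
  exact le_of_tendsto_of_tendsto' (hw.inner (tendsto_const_nhds.sub hxs)) hlim hb

theorem exists_add_smul_mem_of_tendsto (hE : Module.finrank ℝ E = 2)
    {K : Set E} (hK : IsClosed K) (hconv : Convex ℝ K) {x c : E} {a : ℝ} (hx : x ∈ K)
    (ha : 0 < a) (hac : x + a • c ∈ K) {xs : ℕ → E} {as : ℕ → ℝ}
    (hxs : ∀ n, xs n ∈ K) (hxs_lim : Tendsto xs atTop (𝓝 x)) (has : ∀ n, 0 < as n)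
    (has_lim : Tendsto as atTop (𝓝 0)) : ∃ n, xs n + as n • c ∈ K := by
  have : FiniteDimensional ℝ E := Module.finite_of_finrank_eq_succ hE
  by_contra! hout
  choose w hw_norm hw_sep using
    fun n => exists_norm_eq_one_inner_lt_of_notMem hK hconv ⟨x, hx⟩ (hout n)
  have hsep : ∀ n, ∀ b ∈ K, ⟪w n, b - xs n⟫ < as n * ⟪w n, c⟫ := fun n b hb => by
    have := hw_sep n b hb
    rw [inner_add_right, real_inner_smul_right] at this
    rw [inner_sub_right]; linarith
  have hwc : ∀ n, 0 < ⟪w n, c⟫ := fun n =>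
    pos_of_mul_pos_right (by simpa using hsep n _ (hxs n)) (has n).le
  have hc : 0 < ‖c‖ := norm_pos_iff.2 fun h0 => by simpa [h0] using hwc 0
  obtain ⟨w₀, hw₀, φ, hφ, hw_lim⟩ := (isCompact_sphere (0 : E) 1).tendsto_subseq
    (fun n => mem_sphere_zero_iff_norm.2 (hw_norm n))
  rw [mem_sphere_zero_iff_norm] at hw₀
  have hxφ := hxs_lim.comp hφ.tendsto_atTop
  have haφ := has_lim.comp hφ.tendsto_atTop
  have hw₀_supp : ∀ b ∈ K, ⟪w₀, b - x⟫ ≤ 0 := fun b hb =>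
    inner_sub_nonpos_of_tendsto hxφ haφ hw_lim fun n => (hsep (φ n) b hb).le
  have hw₀c : ⟪w₀, c⟫ = 0 := by
    refine le_antisymm ?_ (ge_of_tendsto' (hw_lim.inner tendsto_const_nhds) fun n => (hwc _).le)
    have := hw₀_supp _ hac
    rw [add_sub_cancel_left, real_inner_smul_right] at this
    exact nonpos_of_mul_nonpos_right this ha
  have hgood : ∀ᶠ n in atTop,
      0 < ⟪w (φ n), w₀⟫ ∧ ‖x - xs (φ n)‖ + as (φ n) * ‖c‖ < a * ‖c‖ := by
    have hw₀w₀ : 0 < ⟪w₀, w₀⟫ := by rw [real_inner_self_eq_norm_sq, hw₀]; norm_num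
    have hdist : Tendsto (fun n => ‖x - xs (φ n)‖ + as (φ n) * ‖c‖) atTop
        (𝓝 (‖x - x‖ + 0 * ‖c‖)) :=
      (tendsto_const_nhds.sub hxφ).norm.add (haφ.mul_const _)
    rw [sub_self, norm_zero, zero_mul, add_zero] at hdist
    exact ((hw_lim.inner tendsto_const_nhds).eventually (lt_mem_nhds hw₀w₀)).and
      (hdist.eventually (gt_mem_nhds (by positivity)))
  obtain ⟨n, hn_w₀, hn_close⟩ := hgood.exists
  have hxy : 0 ≤ ⟪w₀, x - xs (φ n)⟫ := by
    have := hw₀_supp _ (hxs (φ n))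
    rw [← neg_sub, inner_neg_right] at this
    linarith
  exact hn_close.not_gt <| mul_norm_lt_of_inner_add_smul_sub_lt hE hw₀ hw₀c hxy hn_w₀.le
    (hwc (φ n)) (hsep (φ n) _ hac)

theorem eventually_add_smul_mem (hE : Module.finrank ℝ E = 2)
    {K : Set E} (hK : IsClosed K) (hconv : Convex ℝ K) {x c : E} {a : ℝ} (hx : x ∈ K)
    (ha : 0 < a) (hac : x + a • c ∈ K) :
    ∀ᶠ q : ℝ × E in 𝓝 (0, x), 0 < q.1 → q.2 ∈ K → q.2 + q.1 • c ∈ K := by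
  by_contra hfreq
  obtain ⟨q, hq_lim, hq⟩ := exists_seq_forall_of_frequently (not_eventually.1 hfreq)
  simp only [Classical.not_imp] at hq
  obtain ⟨n, hn⟩ := exists_add_smul_mem_of_tendsto hE hK hconv hx ha hac (fun n => (hq n).2.1)
    ((continuous_snd.tendsto _).comp hq_lim) (fun n => (hq n).1)
    ((continuous_fst.tendsto _).comp hq_lim)
  exact (hq n).2.2 hn

end InnerProductSpace

theorem image_sub_inter_smul_ne_singleton_zero_iff {𝕜 E : Type*} [Field 𝕜] [AddCommGroup E]
    [Module 𝕜 E] {K C : Set E} {x : E} {a : 𝕜} (hx : x ∈ K) (hC : (0 : E) ∈ C) (ha : a ≠ 0) :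
    ((fun y => y - x) '' K) ∩ (a • C) ≠ {0} ↔ ∃ c ∈ C, c ≠ 0 ∧ x + a • c ∈ K := by
  have h0 : (0 : E) ∈ ((fun y => y - x) '' K) ∩ (a • C) :=
    ⟨⟨x, hx, sub_self x⟩, by simpa using smul_mem_smul_set (a := a) hC⟩
  rw [Ne, eq_singleton_iff_unique_mem, not_and_or, not_forall]
  simp only [h0, not_true_eq_false, false_or, mem_inter_iff, mem_image, mem_smul_set,
    Classical.not_imp]
  constructor
  · rintro ⟨_, ⟨⟨k, hk, rfl⟩, c, hc, hck⟩, hk0⟩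
    refine ⟨c, hc, ?_, by rwa [hck, add_sub_cancel]⟩
    rintro rfl
    exact hk0 (by rw [← hck, smul_zero])
  · rintro ⟨c, hc, hc0, hac⟩
    exact ⟨a • c, ⟨⟨_, hac, add_sub_cancel_left x _⟩, c, hc, rfl⟩, smul_ne_zero ha hc0⟩

theorem stmt14_general (K : Set (EuclideanSpace ℝ (Fin 2))) (hKc : IsCompact K)
    (hKconv : Convex ℝ K)
    (C : Set (EuclideanSpace ℝ (Fin 2)))
    (hC0 : (0 : EuclideanSpace ℝ (Fin 2)) ∈ C)
    (h : ∀ x ∈ frontier K, ∃ a : ℝ, 0 < a ∧ ((fun y => y - x) '' K) ∩ (a • C) ≠ {0}) :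
    ∃ δ : ℝ, 0 < δ ∧ ∀ a : ℝ, 0 < a → a < δ →
      ∀ x ∈ frontier K, ((fun y => y - x) '' K) ∩ (a • C) ≠ {0} := by
  have hfrK : frontier K ⊆ K := hKc.isClosed.frontier_subset
  have hlocal : ∀ x ∈ frontier K, ∀ᶠ q : ℝ × EuclideanSpace ℝ (Fin 2) in 𝓝 (0, x),
      0 < q.1 → q.2 ∈ K → ∃ c ∈ C, c ≠ 0 ∧ q.2 + q.1 • c ∈ K := by
    intro x hx
    obtain ⟨a, ha, hne⟩ := h x hx
    obtain ⟨c, hcC, hc0, hac⟩ :=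
      (image_sub_inter_smul_ne_singleton_zero_iff (hfrK hx) hC0 ha.ne').1 hne
    filter_upwards [eventually_add_smul_mem finrank_euclideanSpace_fin hKc.isClosed hKconv
      (hfrK hx) ha hac] with q hq hq₁ hq₂ using ⟨c, hcC, hc0, hq hq₁ hq₂⟩
  obtain ⟨δ, hδ, hδ_ball⟩ := Metric.eventually_nhds_iff.1
    ((hKc.of_isClosed_subset isClosed_frontier hfrK).eventually_forall_of_forall_eventually
      (P := fun t y => 0 < t → y ∈ K → ∃ c ∈ C, c ≠ 0 ∧ y + t • c ∈ K) hlocal)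
  refine ⟨δ, hδ, fun a ha haδ x hx => ?_⟩
  have hsmall : dist a 0 < δ := by rwa [Real.dist_0_eq_abs, abs_of_pos ha]
  exact (image_sub_inter_smul_ne_singleton_zero_iff (hfrK hx) hC0 ha.ne').2
    (hδ_ball hsmall x hx ha (hfrK hx))

/-- If a compact convex body `K` has no "critical" boundary points (for each
boundary point `x` there is a scale `a` with `(K - x) ∩ aC ≠ {0}`), then the
scale can be chosen uniformly over the boundary. -/
theorem stmt14 (K : Set (EuclideanSpace ℝ (Fin 2))) (hKc : IsCompact K)
    (hKconv : Convex ℝ K) (hKint : (interior K).Nonempty)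
    (C : Set (EuclideanSpace ℝ (Fin 2))) (hCc : IsCompact C)
    (hC0 : (0 : EuclideanSpace ℝ (Fin 2)) ∈ C)
    (h : ∀ x ∈ frontier K, ∃ a : ℝ, 0 < a ∧ ((fun y => y - x) '' K) ∩ (a • C) ≠ {0}) :
    ∃ δ : ℝ, 0 < δ ∧ ∀ a : ℝ, 0 < a → a < δ →
      ∀ x ∈ frontier K, ((fun y => y - x) '' K) ∩ (a • C) ≠ {0} :=
  stmt14_general K hKc hKconv C hC0 h
end

section
/- Let P₁, P₂ ⊆ ℝ² be convex polygons with P₁ = conv(C₁ ∩ S) and P₂ = conv(C₂ ∩ S) for a set S ⊆ ℝ² and axis-aligned closed squares C₁, C₂. If P₁ ∩ P₂ ≠ ∅, then C₁ ∩ C₂ ∩ S ≠ ∅. -/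
/-!
Suppose `C₁ ∩ C₂ ∩ S = ∅` while some `x` lies in both hulls. Then `x ∈ C₁ ∩ C₂`, so in each
coordinate the two intervals overlap, and after a sign change in each coordinate every point of
`C₁ ∩ S` lies in an L-shaped region `{u ≤ p, v ≤ q} \ {u ≥ p', v ≥ q'}` and every point of
`C₂ ∩ S` in the opposite one `{u ≥ p', v ≥ q'} \ {u ≤ p, v ≤ q}`. In the plane the two
L-shapes are separated by the line through the corners `(p', q)` and `(p, q')` of the overlap
rectangle: strictly if the rectangle is non-degenerate, and otherwise all hull points on the
common edge come from points on that edge, which are separated along the edge.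
-/

open Set

section Separation

variable {E : Type*} [AddCommGroup E] [Module ℝ E] {A B : Set E} {f u v : E →ₗ[ℝ] ℝ}
  {t p p' q q' : ℝ}

lemma convex_setOf_lt_union {K : Set E} (hK : Convex ℝ K) (hKf : ∀ z ∈ K, f z ≤ t) :
    Convex ℝ ({y | f y < t} ∪ K) := by
  refine convex_iff_forall_pos.2 fun y hy z hz a b ha hb hab => ?_
  by_cases hyz : y ∈ K ∧ z ∈ K
  · exact Or.inr (hK hyz.1 hyz.2 ha.le hb.le hab)
  have hle : ∀ w ∈ {y | f y < t} ∪ K, f w ≤ t := by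
    rintro w (hw | hw)
    exacts [le_of_lt hw, hKf w hw]
  have hlt : f y < t ∨ f z < t := by
    rcases hy with hy | hy
    · exact Or.inl hy
    rcases hz with hz | hz
    exacts [Or.inr hz, absurd ⟨hy, hz⟩ hyz]
  left
  show f (a • y + b • z) < t
  rw [map_add, map_smul, map_smul, smul_eq_mul, smul_eq_mul]
  calc a * f y + b * f z < a * t + b * t := by
        rcases hlt with hlt | hlt
        · exact add_lt_add_of_lt_of_le (mul_lt_mul_of_pos_left hlt ha)
            (mul_le_mul_of_nonneg_left (hle z hz) hb.le)
        · exact add_lt_add_of_le_of_lt (mul_le_mul_of_nonneg_left (hle y hy) ha.le)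
            (mul_lt_mul_of_pos_left hlt hb)
    _ = t := by rw [← add_mul, hab, one_mul]

lemma mem_convexHull_inter_of_le (hA : ∀ a ∈ A, f a ≤ t) {x : E} (hx : x ∈ convexHull ℝ A)
    (hfx : t ≤ f x) : x ∈ convexHull ℝ (A ∩ {y | f y = t}) := by
  have hK : ∀ z ∈ convexHull ℝ (A ∩ {y | f y = t}), f z ≤ t := fun z hz =>
    (convexHull_min inter_subset_right (convex_hyperplane f.isLinear t) hz).le
  have hsub : A ⊆ {y | f y < t} ∪ convexHull ℝ (A ∩ {y | f y = t}) := fun a ha =>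
    (hA a ha).lt_or_eq.imp id fun h => subset_convexHull ℝ _ ⟨ha, h⟩
  rcases convexHull_min hsub (convex_setOf_lt_union (convex_convexHull ℝ _) hK) hx with h | h
  exacts [absurd hfx (not_le.2 h), h]

lemma disjoint_convexHull_of_lt_of_le (hA : ∀ a ∈ A, f a < t) (hB : ∀ b ∈ B, t ≤ f b) :
    Disjoint (convexHull ℝ A) (convexHull ℝ B) :=
  Disjoint.mono (convexHull_min hA (convex_halfSpace_lt f.isLinear t))
    (convexHull_min hB (convex_halfSpace_ge f.isLinear t))
    (disjoint_left.2 fun x (h₁ : f x < t) (h₂ : t ≤ f x) => h₁.not_ge h₂)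

lemma disjoint_convexHull_of_face (hAu : ∀ a ∈ A, u a ≤ p) (hBu : ∀ b ∈ B, p ≤ u b)
    (hAv : ∀ a ∈ A, u a = p → v a < q) (hBv : ∀ b ∈ B, u b = p → q ≤ v b) :
    Disjoint (convexHull ℝ A) (convexHull ℝ B) := by
  refine disjoint_left.2 fun x hxA hxB => ?_
  have hux : u x = p := le_antisymm (convexHull_min hAu (convex_halfSpace_le u.isLinear p) hxA)
    (convexHull_min hBu (convex_halfSpace_ge u.isLinear p) hxB)
  have hxA' := mem_convexHull_inter_of_le hAu hxA hux.ge
  have hxB' := mem_convexHull_inter_of_le (f := -u) (t := -p)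
    (fun b hb => neg_le_neg (hBu b hb)) hxB (by simp [hux])
  have hfaces : Disjoint (convexHull ℝ (A ∩ {y | u y = p}))
      (convexHull ℝ (B ∩ {y | (-u) y = -p})) :=
    disjoint_convexHull_of_lt_of_le (fun a ha => hAv a ha.1 ha.2)
      (fun b hb => hBv b hb.1 (neg_inj.1 hb.2))
  exact disjoint_left.1 hfaces hxA' hxB'

/-- Two opposite L-shapes around the rectangle `[p', p] × [q', q]` (in coordinates `u`, `v`) have
disjoint convex hulls. -/
lemma disjoint_convexHull_of_corners (hp : p' ≤ p) (hq : q' ≤ q)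
    (hA : ∀ a ∈ A, u a ≤ p ∧ v a ≤ q ∧ (u a < p' ∨ v a < q'))
    (hB : ∀ b ∈ B, p' ≤ u b ∧ q' ≤ v b ∧ (p < u b ∨ q < v b)) :
    Disjoint (convexHull ℝ A) (convexHull ℝ B) := by
  rcases hp.eq_or_lt with rfl | hp
  · refine disjoint_convexHull_of_face (u := u) (v := v) (q := q') (fun a ha => (hA a ha).1)
      (fun b hb => (hB b hb).1) (fun a ha hua => ?_) (fun b hb hub => ?_)
    · exact (hA a ha).2.2.resolve_left hua.not_lt
    · exact hq.trans ((hB b hb).2.2.resolve_left hub.not_gt).le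
  rcases hq.eq_or_lt with rfl | hq
  · refine disjoint_convexHull_of_face (u := v) (v := u) (q := p') (fun a ha => (hA a ha).2.1)
      (fun b hb => (hB b hb).2.1) (fun a ha hva => ?_) (fun b hb hvb => ?_)
    · exact (hA a ha).2.2.resolve_right hva.not_lt
    · exact hp.le.trans ((hB b hb).2.2.resolve_right hvb.not_gt).le
  -- the line through `(p', q)` and `(p, q')`
  refine disjoint_convexHull_of_lt_of_le (f := (q - q') • u + (p - p') • v)
    (t := (q - q') * p' + (p - p') * q) (fun a ha => ?_) (fun b hb => ?_)
  · obtain ⟨hua, hva, hlt⟩ := hA a ha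
    simp only [LinearMap.add_apply, LinearMap.smul_apply, smul_eq_mul]
    rcases hlt with hlt | hlt <;> nlinarith
  · obtain ⟨hub, hvb, hlt⟩ := hB b hb
    simp only [LinearMap.add_apply, LinearMap.smul_apply, smul_eq_mul]
    rcases hlt with hlt | hlt <;> nlinarith

end Separation

lemma exists_sign_mul_separating_Icc {s t n y₀ : ℝ} (hy₁ : y₀ ∈ Icc s (s + n))
    (hy₂ : y₀ ∈ Icc t (t + n)) :
    ∃ σ p' p : ℝ, p' ≤ p ∧ ∀ y,
      (y ∈ Icc s (s + n) → σ * y ≤ p ∧ (p' ≤ σ * y → y ∈ Icc t (t + n))) ∧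
      (y ∈ Icc t (t + n) → p' ≤ σ * y ∧ (σ * y ≤ p → y ∈ Icc s (s + n))) := by
  obtain ⟨hs, hs'⟩ := hy₁
  obtain ⟨ht, ht'⟩ := hy₂
  rcases le_total s t with hst | hst
  · refine ⟨1, t, s + n, by linarith, fun y => ⟨fun ⟨h, h'⟩ => ?_, fun ⟨h, h'⟩ => ?_⟩⟩
    · exact ⟨by linarith, fun h'' => ⟨by linarith, by linarith⟩⟩
    · exact ⟨by linarith, fun h'' => ⟨by linarith, by linarith⟩⟩
  · refine ⟨-1, -(t + n), -s, by linarith, fun y => ⟨fun ⟨h, h'⟩ => ?_, fun ⟨h, h'⟩ => ?_⟩⟩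
    · exact ⟨by linarith, fun h'' => ⟨by linarith, by linarith⟩⟩
    · exact ⟨by linarith, fun h'' => ⟨by linarith, by linarith⟩⟩

def square (c : EuclideanSpace ℝ (Fin 2)) (n : ℝ) : Set (EuclideanSpace ℝ (Fin 2)) :=
  {x | ∀ j, x j ∈ Icc (c j) (c j + n)}

lemma convex_square (c : EuclideanSpace ℝ (Fin 2)) (n : ℝ) : Convex ℝ (square c n) := by
  simp only [square, ofPred_forall]
  exact convex_iInter fun j => (convex_Icc _ _).linear_preimage (EuclideanSpace.projₗ j)

lemma exists_corner_coordinates {c₁ c₂ x : EuclideanSpace ℝ (Fin 2)} {n : ℝ}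
    (hx₁ : x ∈ square c₁ n) (hx₂ : x ∈ square c₂ n) :
    ∃ (u v : EuclideanSpace ℝ (Fin 2) →ₗ[ℝ] ℝ) (p' p q' q : ℝ), p' ≤ p ∧ q' ≤ q ∧
      (∀ a ∈ square c₁ n, u a ≤ p ∧ v a ≤ q ∧ (p' ≤ u a → q' ≤ v a → a ∈ square c₂ n)) ∧
      (∀ b ∈ square c₂ n, p' ≤ u b ∧ q' ≤ v b ∧ (u b ≤ p → v b ≤ q → b ∈ square c₁ n)) := by
  obtain ⟨σ, p', p, hp, h₀⟩ := exists_sign_mul_separating_Icc (hx₁ 0) (hx₂ 0)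
  obtain ⟨τ, q', q, hq, h₁⟩ := exists_sign_mul_separating_Icc (hx₁ 1) (hx₂ 1)
  refine ⟨σ • EuclideanSpace.projₗ 0, τ • EuclideanSpace.projₗ 1, p', p, q', q, hp, hq,
    fun a ha => ?_, fun b hb => ?_⟩
  · obtain ⟨hu, hu'⟩ := (h₀ (a 0)).1 (ha 0)
    obtain ⟨hv, hv'⟩ := (h₁ (a 1)).1 (ha 1)
    exact ⟨hu, hv, fun h h' => Fin.forall_fin_two.2 ⟨hu' h, hv' h'⟩⟩
  · obtain ⟨hu, hu'⟩ := (h₀ (b 0)).2 (hb 0)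
    obtain ⟨hv, hv'⟩ := (h₁ (b 1)).2 (hb 1)
    exact ⟨hu, hv, fun h h' => Fin.forall_fin_two.2 ⟨hu' h, hv' h'⟩⟩

theorem stmt15_general (n : ℝ) (c₁ c₂ : EuclideanSpace ℝ (Fin 2))
    (S : Set (EuclideanSpace ℝ (Fin 2)))
    (C₁ C₂ : Set (EuclideanSpace ℝ (Fin 2)))
    (hC₁ : C₁ = {x | ∀ j, x j ∈ Set.Icc (c₁ j) (c₁ j + n)})
    (hC₂ : C₂ = {x | ∀ j, x j ∈ Set.Icc (c₂ j) (c₂ j + n)})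
    (h : ((convexHull ℝ (C₁ ∩ S)) ∩ (convexHull ℝ (C₂ ∩ S))).Nonempty) :
    (C₁ ∩ C₂ ∩ S).Nonempty := by
  change C₁ = square c₁ n at hC₁
  change C₂ = square c₂ n at hC₂
  subst hC₁ hC₂
  obtain ⟨x, hx₁, hx₂⟩ := h
  obtain ⟨u, v, p', p, q', q, hp, hq, hA, hB⟩ := exists_corner_coordinates
    (convexHull_min inter_subset_left (convex_square c₁ n) hx₁)
    (convexHull_min inter_subset_left (convex_square c₂ n) hx₂)
  by_contra hS
  refine disjoint_left.1 (disjoint_convexHull_of_corners (u := u) (v := v) hp hq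
    (fun a ha => ?_) (fun b hb => ?_)) hx₁ hx₂
  · obtain ⟨hu, hv, hmem⟩ := hA a ha.1
    refine ⟨hu, hv, ?_⟩
    by_contra! hge
    exact hS ⟨a, ⟨ha.1, hmem hge.1 hge.2⟩, ha.2⟩
  · obtain ⟨hu, hv, hmem⟩ := hB b hb.1
    refine ⟨hu, hv, ?_⟩
    by_contra! hle
    exact hS ⟨b, ⟨hmem hle.1 hle.2, hb.1⟩, hb.2⟩

/-- If the convex hulls of `C₁ ∩ S` and `C₂ ∩ S` intersect, where `C₁, C₂` are
axis-aligned closed squares of the same side length in the plane, then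
`C₁ ∩ C₂ ∩ S` is nonempty. -/
theorem stmt15 (n : ℝ) (hn : 0 ≤ n) (c₁ c₂ : EuclideanSpace ℝ (Fin 2))
    (S : Set (EuclideanSpace ℝ (Fin 2)))
    (C₁ C₂ : Set (EuclideanSpace ℝ (Fin 2)))
    (hC₁ : C₁ = {x | ∀ j, x j ∈ Set.Icc (c₁ j) (c₁ j + n)})
    (hC₂ : C₂ = {x | ∀ j, x j ∈ Set.Icc (c₂ j) (c₂ j + n)})
    (h : ((convexHull ℝ (C₁ ∩ S)) ∩ (convexHull ℝ (C₂ ∩ S))).Nonempty) :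
    (C₁ ∩ C₂ ∩ S).Nonempty :=
  stmt15_general n c₁ c₂ S C₁ C₂ hC₁ hC₂ h
end
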